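/- With M₀, M₁ as in the rotation-matrix construction, trace(M₁M₀) = -1 if and only if cos(θ₀ - θ₁) = cot(ρ₀/2) cot(ρ₁/2), assuming sin(ρ₀/2) ≠ 0 and sin(ρ₁/2) ≠ 0. -/

import Mathlib

/-! `Mrot ρ θ` is the rotation by `ρ` about the axis `(0, -sin θ, cos θ)`, so the trace of a
product of two of them depends on the axes only through `cos (θ₀ - θ₁)`, the cosine of the angle
between them. Passing to half angles, `trace (M₁ M₀) + 1` is four times the square of
`cos (ρ₀/2) cos (ρ₁/2) - sin (ρ₀/2) sin (ρ₁/2) cos (θ₀ - θ₁)`, the scalar part of the product of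
the corresponding unit quaternions; the trace is `-1` exactly when this vanishes. -/

open Real Matrix

/-- The rotation matrix `M_k` determined by the angles `ρ` and `θ`. -/
noncomputable def Mrot (ρ θ : ℝ) : Matrix (Fin 3) (Fin 3) ℝ :=
  !![Real.cos ρ, Real.sin ρ * Real.cos θ, Real.sin ρ * Real.sin θ;
     -Real.sin ρ * Real.cos θ, Real.cos ρ * Real.cos θ ^ 2 + Real.sin θ ^ 2,
       (Real.cos ρ - 1) * Real.cos θ * Real.sin θ;
     -Real.sin ρ * Real.sin θ, (Real.cos ρ - 1) * Real.cos θ * Real.sin θ,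
       Real.cos ρ * Real.sin θ ^ 2 + Real.cos θ ^ 2]

theorem trace_Mrot_mul_Mrot (ρ₀ ρ₁ θ₀ θ₁ : ℝ) :
    trace (Mrot ρ₁ θ₁ * Mrot ρ₀ θ₀) =
      cos ρ₀ * cos ρ₁ * (1 + cos (θ₀ - θ₁) ^ 2) - 2 * sin ρ₀ * sin ρ₁ * cos (θ₀ - θ₁)
        + (cos ρ₀ + cos ρ₁) * (1 - cos (θ₀ - θ₁) ^ 2) + cos (θ₀ - θ₁) ^ 2 := by
  simp only [trace_fin_three, mul_apply, Fin.sum_univ_three, Mrot, of_apply, cons_val',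
    cons_val_zero, cons_val_one, cons_val_two, cons_val_fin_one, head_cons, tail_cons,
    head_fin_const, cos_sub]
  linear_combination (cos ρ₀ + cos ρ₁) *
    ((sin θ₁ ^ 2 + cos θ₁ ^ 2) * sin_sq_add_cos_sq θ₀ + sin_sq_add_cos_sq θ₁)

theorem trace_Mrot_mul_Mrot_add_one (ρ₀ ρ₁ θ₀ θ₁ : ℝ) :
    trace (Mrot ρ₁ θ₁ * Mrot ρ₀ θ₀) + 1 =
      4 * (cos (ρ₀ / 2) * cos (ρ₁ / 2) - sin (ρ₀ / 2) * sin (ρ₁ / 2) * cos (θ₀ - θ₁)) ^ 2 := by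
  obtain ⟨x, rfl⟩ : ∃ x, ρ₀ = 2 * x := ⟨ρ₀ / 2, by ring⟩
  obtain ⟨y, rfl⟩ : ∃ y, ρ₁ = 2 * y := ⟨ρ₁ / 2, by ring⟩
  rw [trace_Mrot_mul_Mrot, mul_div_cancel_left₀ x two_ne_zero,
    mul_div_cancel_left₀ y two_ne_zero, cos_two_mul, cos_two_mul, sin_two_mul, sin_two_mul]
  linear_combination 4 * cos (θ₀ - θ₁) ^ 2 *
    ((cos y ^ 2 - 1) * sin_sq_add_cos_sq x - sin x ^ 2 * sin_sq_add_cos_sq y)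

/-- `trace(M₁M₀) = -1` iff `cos(θ₀ - θ₁) = cot(ρ₀/2)cot(ρ₁/2)`. -/
theorem trace_eq_neg_one_iff (ρ₀ ρ₁ θ₀ θ₁ : ℝ)
    (h₀ : Real.sin (ρ₀ / 2) ≠ 0) (h₁ : Real.sin (ρ₁ / 2) ≠ 0) :
    Matrix.trace (Mrot ρ₁ θ₁ * Mrot ρ₀ θ₀) = -1
      ↔ Real.cos (θ₀ - θ₁) = Real.cot (ρ₀ / 2) * Real.cot (ρ₁ / 2) := by
  rw [← add_eq_zero_iff_eq_neg, trace_Mrot_mul_Mrot_add_one, mul_eq_zero,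
    or_iff_right four_ne_zero, pow_eq_zero_iff two_ne_zero, sub_eq_zero,
    cot_eq_cos_div_sin, cot_eq_cos_div_sin, div_mul_div_comm,
    eq_div_iff (mul_ne_zero h₀ h₁), eq_comm, mul_comm (cos (θ₀ - θ₁))]
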